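/- Let (T(t)) and (S(t)) be C₀-semigroups on a Banach space E with (A,dom(A)) the generator of (T(t)), 0 ∈ ρ(A), and extrapolation data (E₋₁,ι,T₋₁,A₋₁). Let (𝒰(t)) and (𝒱(t)) be the semigroups on 𝓛(E) left implemented by (T(t)) and (S(t)), and let 𝒢 be the generator of (𝒰(t)). Suppose 𝒦 ∈ 𝒮^{DS,τ_sot}_{t₀}(𝒰) is such that (𝒱(t)) is the corresponding perturbed semigroup, i.e., (𝒢₋₁+𝒦)|_{𝓛(E)} generates (𝒱(t)). Define B ∈ 𝓛(E,E₋₁) by Bx := (𝒦(Id))x. Then B ∈ 𝒮^{DS}_{t₀}(T) and the operator (A₋₁+B)|_E (domain {x ∈ E : A₋₁(ιx)+Bx ∈ ι(E)}) generates the C₀-semigroup (S(t)). -/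

import Mathlib

open Set Filter Topology MeasureTheory

variable {E E₁ : Type*} [NormedAddCommGroup E] [NormedSpace ℝ E]
  [NormedAddCommGroup E₁] [NormedSpace ℝ E₁]

/-- A `C₀`-semigroup on a Banach space `E`. -/
structure IsC0Semigroup (T : ℝ → E →L[ℝ] E) : Prop where
  map_zero : T 0 = 1
  map_add : ∀ s t : ℝ, 0 ≤ s → 0 ≤ t → T (s + t) = (T s).comp (T t)
  strongCont : ∀ x : E, ContinuousOn (fun t => T t x) (Ici (0:ℝ))

/-- The generator relation of a `C₀`-semigroup: `y = Ax`. -/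
def C0GenRel (T : ℝ → E →L[ℝ] E) (x y : E) : Prop :=
  Tendsto (fun t : ℝ => t⁻¹ • (T t x - x)) (nhdsWithin 0 (Ioi 0)) (nhds y)

/-- Extrapolation data `(E₋₁, ι, T₋₁, A₋₁)` for a `C₀`-semigroup `T` with `0 ∈ ρ(A)`:
`ι : E → E₋₁` is a continuous dense injection, `T₋₁` a `C₀`-semigroup on `E₋₁` extending `T`
via `ι`, whose generator `A₋₁` has domain `ι(E)`, extends `A`, and `Am = A₋₁ ∘ ι : E → E₋₁`
is an isomorphism. -/
structure ExtrapolationData (T : ℝ → E →L[ℝ] E) (T₁ : ℝ → E₁ →L[ℝ] E₁)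
    (ι : E →L[ℝ] E₁) (Am : E ≃L[ℝ] E₁) : Prop where
  c0T : IsC0Semigroup T
  c0T₁ : IsC0Semigroup T₁
  inj : Function.Injective ι
  dense : DenseRange ι
  intertwine : ∀ t : ℝ, 0 ≤ t → ∀ x : E, T₁ t (ι x) = ι (T t x)
  gen₁ : ∀ x : E, C0GenRel T₁ (ι x) (Am x)
  gen₁_dom : ∀ z y : E₁, C0GenRel T₁ z y → z ∈ Set.range ι
  gen_extends : ∀ x y : E, C0GenRel T x y → (Am x : E₁) = ι y
  zero_res : ∃ R : E →L[ℝ] E, (∀ y : E, C0GenRel T (R y) y) ∧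
    ∀ x y : E, C0GenRel T x y → x = R y

/-- The Desch–Schappacher admissibility class `𝒮^{DS}_{t₀}(T)` for a `C₀`-semigroup:
for every strongly continuous `𝓛(E)`-valued `F` the Volterra integrals take values in `ι(E)`,
give a strongly continuous `𝓛(E)`-valued function `V_B F`, and `‖V_B‖ ≤ q < 1`. -/
def MemSDS (T₁ : ℝ → E₁ →L[ℝ] E₁) (ι : E →L[ℝ] E₁) (B : E →L[ℝ] E₁) (t₀ : ℝ) : Prop :=
  ∃ q : ℝ, 0 ≤ q ∧ q < 1 ∧
    ∀ F : ℝ → E →L[ℝ] E, (∀ x : E, ContinuousOn (fun r => F r x) (Icc (0:ℝ) t₀)) →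
      ∃ G : ℝ → E →L[ℝ] E,
        (∀ t ∈ Icc (0:ℝ) t₀, ∀ x : E,
          ι (G t x) = ∫ r in (0:ℝ)..t, T₁ (t - r) (B (F r x))) ∧
        (∀ x : E, ContinuousOn (fun t => G t x) (Icc (0:ℝ) t₀)) ∧
        ∀ c : ℝ, (∀ s ∈ Icc (0:ℝ) t₀, ‖F s‖ ≤ c) → ∀ t ∈ Icc (0:ℝ) t₀, ‖G t‖ ≤ q * c

/-- The semigroup on `𝓛(E)` left implemented by `T`: `𝒰(t)C := T(t) ∘ C`. -/
noncomputable def implemented (T : ℝ → E →L[ℝ] E) (t : ℝ) :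
    (E →L[ℝ] E) →L[ℝ] (E →L[ℝ] E) :=
  ContinuousLinearMap.compL ℝ E E E (T t)

/-- The extrapolated implemented semigroup on `𝓛(E,E₋₁)`: `𝒰₋₁(t)S := T₋₁(t) ∘ S`. -/
noncomputable def implementedExt (T₁ : ℝ → E₁ →L[ℝ] E₁) (t : ℝ) :
    (E →L[ℝ] E₁) →L[ℝ] (E →L[ℝ] E₁) :=
  ContinuousLinearMap.compL ℝ E E₁ E₁ (T₁ t)

/-- Membership in the space `𝔛_{t₀}` of strongly `τ_sot`-continuous, norm-bounded,
bi-equicontinuous functions `F : [0,t₀] → 𝓛(𝓛(E))`. -/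
def MemXsot (t₀ : ℝ) (F : ℝ → (E →L[ℝ] E) →L[ℝ] (E →L[ℝ] E)) : Prop :=
  (∀ (C : E →L[ℝ] E) (x : E), ContinuousOn (fun t => (F t C) x) (Icc (0:ℝ) t₀)) ∧
  (∃ M : ℝ, ∀ t ∈ Icc (0:ℝ) t₀, ‖F t‖ ≤ M) ∧
  ∀ u : ℕ → E →L[ℝ] E, (∃ c : ℝ, ∀ n, ‖u n‖ ≤ c) →
    (∀ x : E, Tendsto (fun n => u n x) atTop (nhds (0:E))) →
    ∀ x : E, ∀ ε > (0:ℝ), ∃ N : ℕ, ∀ n ≥ N, ∀ t ∈ Icc (0:ℝ) t₀, ‖(F t (u n)) x‖ < ε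

/-- The Desch–Schappacher admissibility class `𝒮^{DS,τ_sot}_{t₀}(𝒰)` for the implemented
semigroup: `𝒦 : 𝓛(E) → 𝓛(E,E₋₁)` is `τ_sot`-to-`τ_sot` continuous, and the Volterra operator
`(V_𝒦 F)(t)C = ∫₀ᵗ 𝒰₋₁(t-r) 𝒦(F(r)C) dr` takes values in `𝓛(E)`, maps `𝔛_{t₀}` into itself
and has `‖V_𝒦‖ ≤ q < 1`. -/
def MemSDSsot (T₁ : ℝ → E₁ →L[ℝ] E₁) (ι : E →L[ℝ] E₁)
    (K : (E →L[ℝ] E) →L[ℝ] (E →L[ℝ] E₁)) (t₀ : ℝ) : Prop :=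
  (∀ x : E, ∃ (v : Finset E) (c : ℝ), 0 ≤ c ∧
      ∀ S : E →L[ℝ] E, ‖(K S) x‖ ≤ c * ∑ y ∈ v, ‖S y‖) ∧
  ∃ q : ℝ, 0 ≤ q ∧ q < 1 ∧
    ∀ F : ℝ → (E →L[ℝ] E) →L[ℝ] (E →L[ℝ] E), MemXsot t₀ F →
      ∃ G : ℝ → (E →L[ℝ] E) →L[ℝ] (E →L[ℝ] E), MemXsot t₀ G ∧
        (∀ t ∈ Icc (0:ℝ) t₀, ∀ (C : E →L[ℝ] E) (x : E),
          ι ((G t C) x) = ∫ r in (0:ℝ)..t, T₁ (t - r) ((K (F r C)) x)) ∧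
        ∀ c : ℝ, (∀ s ∈ Icc (0:ℝ) t₀, ‖F s‖ ≤ c) → ∀ t ∈ Icc (0:ℝ) t₀, ‖G t‖ ≤ q * c

/-- A `τ_sot`-bi-continuous semigroup on `𝓛(E)`. -/
structure IsBiContSotSemigroup (U : ℝ → (E →L[ℝ] E) →L[ℝ] (E →L[ℝ] E)) : Prop where
  map_zero : U 0 = 1
  map_add : ∀ s t : ℝ, 0 ≤ s → 0 ≤ t → U (s + t) = (U s).comp (U t)
  strongCont : ∀ (C : E →L[ℝ] E) (x : E), ContinuousOn (fun t => (U t C) x) (Ici (0:ℝ))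
  expBound : ∃ M : ℝ, 1 ≤ M ∧ ∃ ω : ℝ, ∀ t : ℝ, 0 ≤ t → ‖U t‖ ≤ M * Real.exp (ω * t)
  biequi : ∀ t₀ : ℝ, 0 < t₀ → ∀ u : ℕ → E →L[ℝ] E, (∃ c : ℝ, ∀ n, ‖u n‖ ≤ c) →
    (∀ x : E, Tendsto (fun n => u n x) atTop (nhds (0:E))) →
    ∀ x : E, ∀ ε > (0:ℝ), ∃ N : ℕ, ∀ n ≥ N, ∀ t ∈ Icc (0:ℝ) t₀, ‖(U t (u n)) x‖ < ε

/-- The generator relation of a `τ_sot`-bi-continuous semigroup on `𝓛(E)`. -/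
def SotGenRel (U : ℝ → (E →L[ℝ] E) →L[ℝ] (E →L[ℝ] E)) (C Y : E →L[ℝ] E) : Prop :=
  (∀ x : E, Tendsto (fun t : ℝ => t⁻¹ • ((U t C) x - C x))
      (nhdsWithin 0 (Ioi 0)) (nhds (Y x))) ∧
    ∃ M : ℝ, ∀ t ∈ Ioc (0:ℝ) 1, ‖U t C - C‖ ≤ M * t

/-- `V` is a `τ_sot`-bi-continuous semigroup on `𝓛(E)` generated by `(𝒢₋₁ + 𝒦)|_{𝓛(E)}`,
where `𝒢₋₁ C = A₋₁ ∘ ι ∘ C` and the domain is `{C : 𝒢₋₁C + 𝒦C ∈ 𝓛(E)}`. -/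
def GeneratedByPerturbedImpl (V : ℝ → (E →L[ℝ] E) →L[ℝ] (E →L[ℝ] E))
    (ι : E →L[ℝ] E₁) (Am : E ≃L[ℝ] E₁)
    (K : (E →L[ℝ] E) →L[ℝ] (E →L[ℝ] E₁)) : Prop :=
  IsBiContSotSemigroup V ∧ ∀ C Y : E →L[ℝ] E,
    SotGenRel V C Y ↔ ι.comp Y = ((Am : E →L[ℝ] E₁)).comp C + K C

/-! The heart of the proof is the identity `𝒦 D = 𝒦 Id ∘ D`. If `C` lies in the domain of the
generator of `𝒱`, then so does `C ∘ D`, with generator value composed with `D`; comparing the two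
generator equations gives `𝒦 (C ∘ D) = 𝒦 C ∘ D`. The averages `h⁻¹ ∫₀ʰ S r dr` lie in that domain
and tend strongly to `Id`, and `𝒦` is strongly continuous, so the identity follows in the limit.
With it, `V_B F = (V_𝒦 (r ↦ F r ∘ ·)) Id`, which gives `B ∈ 𝒮^{DS}`, and testing the generator of
`𝒱` on rank-one operators `φ ⊗ x` with `φ w = 1` identifies the generator of `S` with
`(A₋₁ + B)|_E`. -/

namespace ContinuousLinearMap

variable {E E' : Type*} [NormedAddCommGroup E] [NormedSpace ℝ E]
  [NormedAddCommGroup E'] [NormedSpace ℝ E']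

theorem exists_forall_norm_le_of_continuousOn_apply [CompleteSpace E] {F : ℝ → E →L[ℝ] E'}
    {a b : ℝ} (hF : ∀ x, ContinuousOn (fun r => F r x) (Icc a b)) :
    ∃ M, 0 ≤ M ∧ ∀ r ∈ Icc a b, ‖F r‖ ≤ M := by
  obtain ⟨M, hM⟩ := banach_steinhaus (g := fun r : Icc a b => F r) fun x =>
    (isCompact_Icc.exists_bound_of_continuousOn (hF x)).imp fun _ h r => h r r.2
  exact ⟨max M 0, le_max_right _ _, fun r hr => (hM ⟨r, hr⟩).trans (le_max_left _ _)⟩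

theorem norm_intervalIntegral_apply_le {F : ℝ → E →L[ℝ] E'} {a b M : ℝ} (hab : a ≤ b)
    (hM : ∀ r ∈ Icc a b, ‖F r‖ ≤ M) (x : E) :
    ‖∫ r in a..b, F r x‖ ≤ M * ‖x‖ * (b - a) := by
  have := intervalIntegral.norm_integral_le_of_norm_le_const (f := fun r => F r x)
    (C := M * ‖x‖) fun r hr => (F r).le_of_opNorm_le
      (hM r (Ioc_subset_Icc_self (uIoc_of_le hab ▸ hr))) x
  rwa [abs_of_nonneg (sub_nonneg.2 hab)] at this

theorem exists_apply_eq_intervalIntegral [CompleteSpace E] {F : ℝ → E →L[ℝ] E'} {a b : ℝ}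
    (hab : a ≤ b) (hF : ∀ x, ContinuousOn (fun r => F r x) (Icc a b)) :
    ∃ I : E →L[ℝ] E', ∀ x, I x = ∫ r in a..b, F r x := by
  have hint : ∀ x, IntervalIntegrable (fun r => F r x) volume a b := fun x =>
    (hF x).intervalIntegrable_of_Icc hab
  obtain ⟨M, -, hM⟩ := exists_forall_norm_le_of_continuousOn_apply hF
  let I : E →ₗ[ℝ] E' :=
    { toFun := fun x => ∫ r in a..b, F r x
      map_add' := fun x y => by
        simp only [map_add]
        exact intervalIntegral.integral_add (hint x) (hint y)
      map_smul' := fun c x => by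
        simp only [map_smul]
        exact intervalIntegral.integral_smul c _ }
  exact ⟨I.mkContinuous (M * (b - a)) fun x =>
    (norm_intervalIntegral_apply_le hab hM x).trans_eq (by ring), fun _ => rfl⟩

end ContinuousLinearMap

theorem ContinuousOn.tendsto_inv_smul_intervalIntegral {E : Type*} [NormedAddCommGroup E]
    [NormedSpace ℝ E] [CompleteSpace E] {f : ℝ → E} (hf : ContinuousOn f (Ici 0)) :
    Tendsto (fun t : ℝ => t⁻¹ • ∫ u in (0:ℝ)..t, f u) (𝓝[>] 0) (𝓝 (f 0)) := by
  have hderiv : HasDerivWithinAt (fun t => ∫ u in (0:ℝ)..t, f u) (f 0) (Ioi 0) 0 :=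
    (intervalIntegral.integral_hasDerivWithinAt_right (s := Ici 0) (t := Ioi 0)
      IntervalIntegrable.refl
      ((hf.mono Ioi_subset_Ici_self).stronglyMeasurableAtFilter_nhdsWithin measurableSet_Ioi 0)
      ((hf 0 self_mem_Ici).mono Ioi_subset_Ici_self)).mono Ioi_subset_Ici_self
  refine ((hasDerivWithinAt_iff_tendsto_slope' (lt_irrefl 0)).1 hderiv).congr fun t => ?_
  simp [slope_def_module]

section Implemented

variable {E : Type*} [NormedAddCommGroup E] [NormedSpace ℝ E]

@[simp]
theorem implemented_apply (T : ℝ → E →L[ℝ] E) (t : ℝ) (C : E →L[ℝ] E) :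
    implemented T t C = (T t).comp C :=
  rfl

theorem norm_implemented_le (T : ℝ → E →L[ℝ] E) (t : ℝ) : ‖implemented T t‖ ≤ ‖T t‖ :=
  ContinuousLinearMap.opNorm_le_bound _ (norm_nonneg _) fun C => (T t).opNorm_comp_le C

theorem memXsot_implemented [CompleteSpace E] {F : ℝ → E →L[ℝ] E} {t₀ : ℝ}
    (hF : ∀ x, ContinuousOn (fun r => F r x) (Icc 0 t₀)) : MemXsot t₀ (implemented F) := by
  obtain ⟨M, hM0, hM⟩ := ContinuousLinearMap.exists_forall_norm_le_of_continuousOn_apply hF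
  refine ⟨fun C x => by simpa using hF (C x),
    ⟨M, fun t ht => (norm_implemented_le F t).trans (hM t ht)⟩, fun u _ hu x ε hε => ?_⟩
  obtain ⟨N, hN⟩ := Metric.tendsto_atTop.1 (hu x) (ε / (M + 1)) (by positivity)
  refine ⟨N, fun n hn t ht => ?_⟩
  calc ‖implemented F t (u n) x‖ = ‖F t (u n x)‖ := rfl
    _ ≤ M * ‖u n x‖ := (F t).le_of_opNorm_le (hM t ht) _
    _ ≤ (M + 1) * ‖u n x‖ := by gcongr; linarith
    _ < (M + 1) * (ε / (M + 1)) := by gcongr; simpa using hN n hn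
    _ = ε := by field_simp

end Implemented

namespace SotGenRel

variable {E : Type*} [NormedAddCommGroup E] [NormedSpace ℝ E] {C Y : E →L[ℝ] E}

theorem const_smul {U : ℝ → (E →L[ℝ] E) →L[ℝ] (E →L[ℝ] E)} (h : SotGenRel U C Y) (c : ℝ) :
    SotGenRel U (c • C) (c • Y) := by
  obtain ⟨hlim, M, hM⟩ := h
  refine ⟨fun x => ?_, |c| * M, fun t ht => ?_⟩
  · simpa [smul_sub, smul_comm c] using (hlim x).const_smul c
  · rw [map_smul, ← smul_sub, norm_smul, Real.norm_eq_abs, mul_assoc]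
    exact mul_le_mul_of_nonneg_left (hM t ht) (abs_nonneg c)

theorem implemented_comp {S : ℝ → E →L[ℝ] E} (h : SotGenRel (implemented S) C Y)
    (D : E →L[ℝ] E) : SotGenRel (implemented S) (C.comp D) (Y.comp D) := by
  obtain ⟨hlim, M, hM⟩ := h
  refine ⟨fun x => by simpa using hlim (D x), M * ‖D‖, fun t ht => ?_⟩
  calc ‖implemented S t (C.comp D) - C.comp D‖ = ‖(implemented S t C - C).comp D‖ := rfl
    _ ≤ ‖implemented S t C - C‖ * ‖D‖ := ContinuousLinearMap.opNorm_comp_le _ _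
    _ ≤ M * t * ‖D‖ := by gcongr; exact hM t ht
    _ = M * ‖D‖ * t := by ring

end SotGenRel

namespace IsC0Semigroup

variable {E : Type*} [NormedAddCommGroup E] [NormedSpace ℝ E] {S : ℝ → E →L[ℝ] E}

theorem exists_norm_le [CompleteSpace E] (hS : IsC0Semigroup S) (b : ℝ) :
    ∃ M, 0 ≤ M ∧ ∀ t ∈ Icc 0 b, ‖S t‖ ≤ M :=
  ContinuousLinearMap.exists_forall_norm_le_of_continuousOn_apply fun x =>
    (hS.strongCont x).mono Icc_subset_Ici_self

theorem intervalIntegrable (hS : IsC0Semigroup S) (z : E) {a b : ℝ} (ha : 0 ≤ a) (hb : 0 ≤ b) :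
    IntervalIntegrable (fun u => S u z) volume a b :=
  ((hS.strongCont z).mono fun _ hr => le_trans (le_min ha hb) hr.1).intervalIntegrable

theorem apply_intervalIntegral_sub [CompleteSpace E] (hS : IsC0Semigroup S) {t h : ℝ}
    (ht : 0 ≤ t) (hh : 0 ≤ h) (z : E) :
    S t (∫ u in (0:ℝ)..h, S u z) - ∫ u in (0:ℝ)..h, S u z
      = ∫ u in (0:ℝ)..t, S u (S h z - z) := by
  have shift : ∀ a b : ℝ, ∫ u in (0:ℝ)..b, S (a + u) z = ∫ u in a..a + b, S u z := fun a b => by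
    simpa using intervalIntegral.integral_comp_add_left (fun u => S u z) a (a := 0) (b := b)
  have hleft : S t (∫ u in (0:ℝ)..h, S u z) = ∫ u in t..t + h, S u z := by
    rw [← (S t).intervalIntegral_comp_comm (hS.intervalIntegrable z le_rfl hh), ← shift]
    refine intervalIntegral.integral_congr fun u hu => ?_
    rw [hS.map_add t u ht (uIcc_of_le hh ▸ hu).1]
    rfl
  have hright : ∫ u in (0:ℝ)..t, S u (S h z) = ∫ u in h..h + t, S u z := by
    rw [← shift]
    refine intervalIntegral.integral_congr fun u hu => ?_
    rw [add_comm, hS.map_add u h (uIcc_of_le ht ▸ hu).1 hh]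
    rfl
  have hint : ∀ b, 0 ≤ b → IntervalIntegrable (fun u => S u z) volume 0 b := fun b hb =>
    hS.intervalIntegrable z le_rfl hb
  have hint' : IntervalIntegrable (fun u => S u (S h z)) volume 0 t := by
    simpa using hS.intervalIntegrable (S h z) le_rfl ht
  simp only [map_sub]
  rw [intervalIntegral.integral_sub hint' (hint t ht), hleft, hright,
    ← intervalIntegral.integral_interval_sub_left (hint _ (by positivity)) (hint t ht),
    ← intervalIntegral.integral_interval_sub_left (hint _ (by positivity)) (hint h hh),
    add_comm h t]
  abel

theorem sotGenRel_implemented_intervalIntegral [CompleteSpace E] (hS : IsC0Semigroup S)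
    {I : ℝ → E →L[ℝ] E} (hI : ∀ t, 0 ≤ t → ∀ z, I t z = ∫ u in (0:ℝ)..t, S u z)
    {h : ℝ} (hh : 0 ≤ h) : SotGenRel (implemented S) (I h) (S h - 1) := by
  have hsub : ∀ t, 0 ≤ t → ∀ z, implemented S t (I h) z - I h z = I t (S h z - z) :=
    fun t ht z => by
      simp only [implemented_apply, ContinuousLinearMap.comp_apply, hI h hh, hI t ht]
      exact hS.apply_intervalIntegral_sub ht hh z
  obtain ⟨M, hM0, hM⟩ := hS.exists_norm_le 1
  refine ⟨fun z => ?_, M * ‖S h - 1‖, fun t ht => ?_⟩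
  · have hcont : ContinuousOn (fun u => S u (S h z - z)) (Ici 0) := hS.strongCont _
    refine tendsto_nhdsWithin_congr (fun t ht => ?_)
      (hcont.tendsto_inv_smul_intervalIntegral.trans_eq ?_)
    · rw [hsub t (le_of_lt ht), hI t (le_of_lt ht)]
    · simp [hS.map_zero]
  · refine ContinuousLinearMap.opNorm_le_bound _ (mul_nonneg (mul_nonneg hM0 (norm_nonneg _)) ht.1.le) fun z => ?_
    rw [sub_apply, hsub t ht.1.le, hI t ht.1.le]
    calc ‖∫ u in (0:ℝ)..t, S u (S h z - z)‖ ≤ M * ‖S h z - z‖ * (t - 0) :=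
          ContinuousLinearMap.norm_intervalIntegral_apply_le ht.1.le
            (fun r hr => hM r ⟨hr.1, hr.2.trans ht.2⟩) _
      _ ≤ M * (‖S h - 1‖ * ‖z‖) * t := by
          rw [sub_zero]
          exact mul_le_mul_of_nonneg_right
            (mul_le_mul_of_nonneg_left ((S h - 1).le_opNorm z) hM0) ht.1.le
      _ = M * ‖S h - 1‖ * t * ‖z‖ := by ring

theorem exists_sotGenRel_tendsto_id [CompleteSpace E] (hS : IsC0Semigroup S) :
    ∃ Q : ℝ → E →L[ℝ] E, (∀ h, 0 < h → ∃ Y, SotGenRel (implemented S) (Q h) Y) ∧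
      ∀ z, Tendsto (fun h => Q h z) (𝓝[>] 0) (𝓝 z) := by
  have hex : ∀ t : ℝ, ∃ I : E →L[ℝ] E, 0 ≤ t → ∀ z, I z = ∫ u in (0:ℝ)..t, S u z := fun t => by
    by_cases ht : 0 ≤ t
    · obtain ⟨I, hI⟩ := ContinuousLinearMap.exists_apply_eq_intervalIntegral ht fun z =>
        (hS.strongCont z).mono Icc_subset_Ici_self
      exact ⟨I, fun _ => hI⟩
    · exact ⟨0, fun h => absurd h ht⟩
  choose I hI using hex
  refine ⟨fun h => h⁻¹ • I h,
    fun h hh => ⟨_, (hS.sotGenRel_implemented_intervalIntegral hI hh.le).const_smul h⁻¹⟩,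
    fun z => ?_⟩
  refine tendsto_nhdsWithin_congr (fun t ht => ?_)
    ((hS.strongCont z).tendsto_inv_smul_intervalIntegral.trans_eq ?_)
  · rw [smul_apply, hI t (le_of_lt ht)]
  · simp [hS.map_zero]

theorem exists_norm_sub_le_mul [CompleteSpace E] (hS : IsC0Semigroup S) {x y : E}
    (hxy : C0GenRel S x y) : ∃ M, ∀ t ∈ Ioc (0:ℝ) 1, ‖S t x - x‖ ≤ M * t := by
  obtain ⟨Mb, hMb0, hMb⟩ := hS.exists_norm_le 1
  obtain ⟨δ, hδ, hδy⟩ := mem_nhdsGT_iff_exists_Ioo_subset.1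
    (hxy.norm.eventually_le_const (lt_add_one ‖y‖))
  refine ⟨max (‖y‖ + 1) ((Mb + 1) * ‖x‖ / δ), fun t ht => ?_⟩
  rcases lt_or_ge t δ with htδ | htδ
  · calc ‖S t x - x‖ = t * ‖t⁻¹ • (S t x - x)‖ := by
          rw [norm_smul, norm_inv, Real.norm_of_nonneg ht.1.le, mul_inv_cancel_left₀ ht.1.ne']
      _ ≤ t * (‖y‖ + 1) := mul_le_mul_of_nonneg_left (hδy ⟨ht.1, htδ⟩) ht.1.le
      _ ≤ _ := by rw [mul_comm]; exact mul_le_mul_of_nonneg_right (le_max_left _ _) ht.1.le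
  · have hδ' : (0:ℝ) < δ := hδ
    calc ‖S t x - x‖ ≤ ‖S t x‖ + ‖x‖ := norm_sub_le _ _
      _ ≤ Mb * ‖x‖ + ‖x‖ := by
          gcongr; exact (S t).le_of_opNorm_le (hMb t (Ioc_subset_Icc_self ht)) x
      _ = (Mb + 1) * ‖x‖ / δ * δ := by field_simp
      _ ≤ (Mb + 1) * ‖x‖ / δ * t := by gcongr
      _ ≤ _ := mul_le_mul_of_nonneg_right (le_max_right _ _) ht.1.le

theorem sotGenRel_smulRight [CompleteSpace E] (hS : IsC0Semigroup S) {x y : E}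
    (hxy : C0GenRel S x y) (φ : StrongDual ℝ E) :
    SotGenRel (implemented S) (φ.smulRight x) (φ.smulRight y) := by
  obtain ⟨M, hM⟩ := hS.exists_norm_sub_le_mul hxy
  have hsub : ∀ t, implemented S t (φ.smulRight x) - φ.smulRight x = φ.smulRight (S t x - x) :=
    fun t => by ext z; simp [smul_sub]
  refine ⟨fun z => ?_, ‖φ‖ * M, fun t ht => ?_⟩
  · simpa [smul_sub, smul_comm (φ z)] using hxy.const_smul (φ z)
  · rw [hsub, ContinuousLinearMap.norm_smulRight_apply, mul_assoc]
    exact mul_le_mul_of_nonneg_left (hM t ht) (norm_nonneg φ)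

end IsC0Semigroup

section Perturbation

variable {E E₁ : Type*} [NormedAddCommGroup E] [NormedSpace ℝ E]
  [NormedAddCommGroup E₁] [NormedSpace ℝ E₁] {K : (E →L[ℝ] E) →L[ℝ] (E →L[ℝ] E₁)}

theorem tendsto_apply_of_forall_norm_le_sum
    (hK : ∀ x : E, ∃ (v : Finset E) (c : ℝ), 0 ≤ c ∧
      ∀ C : E →L[ℝ] E, ‖(K C) x‖ ≤ c * ∑ y ∈ v, ‖C y‖)
    {α : Type*} {l : Filter α} {C : α → E →L[ℝ] E} {C₀ : E →L[ℝ] E}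
    (hC : ∀ y, Tendsto (fun a => C a y) l (𝓝 (C₀ y))) (x : E) :
    Tendsto (fun a => K (C a) x) l (𝓝 (K C₀ x)) := by
  obtain ⟨v, c, -, hc⟩ := hK x
  rw [tendsto_iff_norm_sub_tendsto_zero]
  refine squeeze_zero (fun _ => norm_nonneg _) (fun a => ?_)
    (g := fun a => c * ∑ y ∈ v, ‖C a y - C₀ y‖) ?_
  · simpa using hc (C a - C₀)
  · simpa using (tendsto_finsetSum v fun y _ =>
      tendsto_iff_norm_sub_tendsto_zero.1 (hC y)).const_mul c

variable {S : ℝ → E →L[ℝ] E} {ι A : E →L[ℝ] E₁}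

theorem comp_eq_of_sotGenRel
    (hgen : ∀ C Y, SotGenRel (implemented S) C Y ↔ ι.comp Y = A.comp C + K C)
    {C Y : E →L[ℝ] E} (hC : SotGenRel (implemented S) C Y) (D : E →L[ℝ] E) :
    K (C.comp D) = (K C).comp D := by
  have hCD := (hgen _ _).1 (hC.implemented_comp D)
  have hC' := congrArg (·.comp D) ((hgen _ _).1 hC)
  simp only [ContinuousLinearMap.comp_assoc, ContinuousLinearMap.add_comp] at hC'
  exact add_left_cancel (hCD.symm.trans hC')

end Perturbation

namespace IsC0Semigroup

variable {E E₁ : Type*} [NormedAddCommGroup E] [NormedSpace ℝ E] [CompleteSpace E]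
  [NormedAddCommGroup E₁] [NormedSpace ℝ E₁] {K : (E →L[ℝ] E) →L[ℝ] (E →L[ℝ] E₁)}
  {S : ℝ → E →L[ℝ] E} {ι A : E →L[ℝ] E₁}

theorem apply_eq_apply_one_of_generates (hS : IsC0Semigroup S)
    (hgen : ∀ C Y, SotGenRel (implemented S) C Y ↔ ι.comp Y = A.comp C + K C)
    (hK : ∀ x : E, ∃ (v : Finset E) (c : ℝ), 0 ≤ c ∧
      ∀ C : E →L[ℝ] E, ‖(K C) x‖ ≤ c * ∑ y ∈ v, ‖C y‖)
    (D : E →L[ℝ] E) (x : E) : K D x = K 1 (D x) := by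
  obtain ⟨Q, hQgen, hQ⟩ := hS.exists_sotGenRel_tendsto_id
  have hcomp : ∀ h ∈ Ioi (0:ℝ), K ((Q h).comp D) x = K (Q h) (D x) := fun h hh => by
    obtain ⟨Y, hY⟩ := hQgen h hh
    rw [comp_eq_of_sotGenRel hgen hY]
    rfl
  exact tendsto_nhds_unique
    (tendsto_nhdsWithin_congr hcomp (tendsto_apply_of_forall_norm_le_sum hK (fun y => hQ (D y)) x))
    (tendsto_apply_of_forall_norm_le_sum hK (C₀ := 1) hQ (D x))

theorem c0GenRel_iff_of_generates (hS : IsC0Semigroup S) {B : E →L[ℝ] E₁}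
    (hgen : ∀ C Y, SotGenRel (implemented S) C Y ↔ ι.comp Y = A.comp C + K C)
    (hKB : ∀ D x, K D x = B (D x)) (x y : E) :
    C0GenRel S x y ↔ ι y = A x + B x := by
  rcases subsingleton_or_nontrivial E with hE | hE
  · simp [C0GenRel, Subsingleton.elim x 0, Subsingleton.elim y 0]
  obtain ⟨w, hw⟩ := exists_ne (0 : E)
  obtain ⟨φ, hφ⟩ := SeparatingDual.exists_eq_one (R := ℝ) hw
  have hrank : SotGenRel (implemented S) (φ.smulRight x) (φ.smulRight y) ↔ ι y = A x + B x := by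
    rw [hgen]
    refine ⟨fun h => by simpa [hφ, hKB] using congrArg (· w) h, fun h => ?_⟩
    ext z
    simp [hKB, h]
  rw [← hrank]
  exact ⟨fun h => hS.sotGenRel_smulRight h φ, fun h => by simpa [C0GenRel, hφ] using h.1 w⟩

end IsC0Semigroup

theorem MemSDSsot.memSDS {E E₁ : Type*} [NormedAddCommGroup E] [NormedSpace ℝ E]
    [CompleteSpace E] [NormedAddCommGroup E₁] [NormedSpace ℝ E₁] {T₁ : ℝ → E₁ →L[ℝ] E₁}
    {ι B : E →L[ℝ] E₁} {K : (E →L[ℝ] E) →L[ℝ] (E →L[ℝ] E₁)} {t₀ : ℝ}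
    (hK : MemSDSsot T₁ ι K t₀) (hKB : ∀ D x, K D x = B (D x)) : MemSDS T₁ ι B t₀ := by
  obtain ⟨-, q, hq0, hq1, hV⟩ := hK
  refine ⟨q, hq0, hq1, fun F hF => ?_⟩
  obtain ⟨G, hGX, hGint, hGnorm⟩ := hV _ (memXsot_implemented hF)
  refine ⟨fun t => G t 1, fun t ht x => by simpa [hKB] using hGint t ht 1 x,
    fun x => hGX.1 1 x, fun c hc t ht => ?_⟩
  have hFc : ∀ s ∈ Icc 0 t₀, ‖implemented F s‖ ≤ c := fun s hs =>
    (norm_implemented_le F s).trans (hc s hs)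
  calc ‖G t 1‖ ≤ ‖G t‖ * 1 := (G t).le_opNorm_of_le ContinuousLinearMap.norm_id_le
    _ ≤ q * c := (mul_one _).trans_le (hGnorm c hFc t ht)

theorem stmt_8_general [CompleteSpace E]
    (S : ℝ → E →L[ℝ] E) (T₁ : ℝ → E₁ →L[ℝ] E₁) (ι : E →L[ℝ] E₁) (Am : E ≃L[ℝ] E₁)
    (hS : IsC0Semigroup S)
    (t₀ : ℝ) (K : (E →L[ℝ] E) →L[ℝ] (E →L[ℝ] E₁))
    (hK : MemSDSsot T₁ ι K t₀)
    (hgen : GeneratedByPerturbedImpl (implemented S) ι Am K) :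
    MemSDS T₁ ι (K 1) t₀ ∧ ∀ x y : E, C0GenRel S x y ↔ ι y = Am x + (K 1) x := by
  have hKB : ∀ D x, K D x = K 1 (D x) := hS.apply_eq_apply_one_of_generates hgen.2 hK.1
  exact ⟨hK.memSDS hKB, hS.c0GenRel_iff_of_generates hgen.2 hKB⟩

/-- If `𝒦 ∈ 𝒮^{DS,τ_sot}_{t₀}(𝒰)` is such that the perturbed semigroup is
implemented by a `C₀`-semigroup `S`, then `B := 𝒦(Id)` belongs to `𝒮^{DS}_{t₀}(T)` and
`(A₋₁+B)|_E` generates `S`. -/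
theorem stmt_8 [CompleteSpace E] [CompleteSpace E₁]
    (T S : ℝ → E →L[ℝ] E) (T₁ : ℝ → E₁ →L[ℝ] E₁) (ι : E →L[ℝ] E₁) (Am : E ≃L[ℝ] E₁)
    (hExt : ExtrapolationData T T₁ ι Am) (hS : IsC0Semigroup S)
    (t₀ : ℝ) (ht₀ : 0 < t₀) (K : (E →L[ℝ] E) →L[ℝ] (E →L[ℝ] E₁))
    (hK : MemSDSsot T₁ ι K t₀)
    (hgen : GeneratedByPerturbedImpl (implemented S) ι Am K) :
    MemSDS T₁ ι (K 1) t₀ ∧ ∀ x y : E, C0GenRel S x y ↔ ι y = Am x + (K 1) x :=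
  stmt_8_general S T₁ ι Am hS t₀ K hK hgen
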